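/- arXiv:1307.6487 — 2 statements merged into one kernel-verified Lean document; each statement's English description precedes it below -/
import Mathlib

section
/- If Y and Y' are standard Young tableaux with n boxes whose Young diagrams have different shapes, then τ_g(Y) ≠ τ_g(Y'); that is, there exists m ≥ 0 such that Y and Y' are not equivalent to order m. -/
/-! ## Standard Young tableaux, encoded by entry positions

A filling with `n` entries is a function `p : ℕ → ℕ × ℕ` where `p k` is the
(row, column) position (0-indexed, rows increasing downwards) of the entry
numbered `k + 1`; only the values `p 0, …, p (n-1)` are relevant. -/

/-- `p` is a standard Young tableau with `n` boxes: the positions of the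
entries are distinct and every initial segment of positions forms a Young
diagram (a lower set in `ℕ × ℕ`); this is equivalent to the shape being a
Young diagram with entries strictly increasing along rows and columns. -/
def IsSYT (n : ℕ) (p : ℕ → ℕ × ℕ) : Prop :=
  Set.InjOn p (Set.Iio n) ∧
  ∀ k < n, IsLowerSet {q : ℕ × ℕ | ∃ j ≤ k, p j = q}

/-- The shape (set of boxes) of a filling with `n` entries. -/
def shapeYT (n : ℕ) (p : ℕ → ℕ × ℕ) : Set (ℕ × ℕ) :=
  p '' Set.Iio n

/-- The τ-invariant of a filling: `i ∈ tauYT n p` encodes the simple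
transposition `s_(i+1)` (indices shifted down by one throughout), and holds
when the entry indexed `i + 1` lies in a strictly lower row than the entry
indexed `i`. -/
def tauYT (n : ℕ) (p : ℕ → ℕ × ℕ) : Set ℕ :=
  {i | i + 1 < n ∧ (p i).1 < (p (i + 1)).1}

/-- Exchange the entries indexed `i` and `i + 1` (the action of the simple
transposition `s_(i+1)` on fillings). -/
def swapEntries (i : ℕ) (p : ℕ → ℕ × ℕ) : ℕ → ℕ × ℕ :=
  p ∘ Equiv.swap i (i + 1)

/-- Two simple transpositions indexed by `i` and `j` are adjacent. -/
def Adjacent (i j : ℕ) : Prop := i = j + 1 ∨ j = i + 1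

/-- `D^YT_{i,j}`: standard Young tableaux whose τ-invariant contains `i` but
not `j`. -/
def DYT (n i j : ℕ) (p : ℕ → ℕ × ℕ) : Prop :=
  IsSYT n p ∧ i ∈ tauYT n p ∧ j ∉ tauYT n p

open Classical in
/-- `f^YT_{i,j}` : the unique one of `s_i · Y`, `s_j · Y` that is a standard
tableau lying in `D^YT_{j,i}` (junk outside the intended domain). -/
noncomputable def fYT (n i j : ℕ) (p : ℕ → ℕ × ℕ) : ℕ → ℕ × ℕ :=
  if DYT n j i (swapEntries i p) then swapEntries i p else swapEntries j p

/-- A column superstandard tableau: the columns are filled consecutively,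
`1, …, c₁` down the first column, then `c₁+1, …, c₁+c₂` down the second
column, and so on. -/
def IsColSuperstandard (n : ℕ) (p : ℕ → ℕ × ℕ) : Prop :=
  IsSYT n p ∧ (0 < n → p 0 = (0, 0)) ∧
  ∀ k, k + 1 < n →
    p (k + 1) = ((p k).1 + 1, (p k).2) ∨ p (k + 1) = (0, (p k).2 + 1)

/-- Generalized τ-equivalence to order `m` on fillings. -/
def approxYT (n : ℕ) : ℕ → (ℕ → ℕ × ℕ) → (ℕ → ℕ × ℕ) → Prop
  | 0, p, q => tauYT n p = tauYT n q
  | m + 1, p, q => approxYT n m p q ∧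
      ∀ i j, Adjacent i j → i + 1 < n → j + 1 < n →
        DYT n i j p → DYT n i j q →
        approxYT n m (fYT n i j p) (fYT n i j q)

/-! ## Permutations -/

/-- The τ-invariant of a permutation of `{0, …, n-1}` (one-line notation
`x 0, x 1, …, x (n-1)`): `i ∈ tauSn x` encodes the simple transposition
`s_(i+1)`, and holds iff the value `i + 1` appears to the left of the value
`i`; equivalently `ℓ(s_(i+1) x) < ℓ(x)`. -/
def tauSn {n : ℕ} (x : Equiv.Perm (Fin n)) : Set ℕ :=
  {i | ∃ h : i + 1 < n, x⁻¹ ⟨i + 1, h⟩ < x⁻¹ ⟨i, Nat.lt_of_succ_lt h⟩}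

/-- Left multiplication by the simple transposition exchanging the values
`i` and `i + 1`. -/
def simpleMul {n : ℕ} (i : ℕ) (x : Equiv.Perm (Fin n)) : Equiv.Perm (Fin n) :=
  if h : i + 1 < n then
    Equiv.swap (⟨i, Nat.lt_of_succ_lt h⟩ : Fin n) ⟨i + 1, h⟩ * x
  else x

/-- `D^{S_n}_{i,j}`: permutations whose τ-invariant contains `i` but not `j`. -/
def DSn {n : ℕ} (i j : ℕ) (x : Equiv.Perm (Fin n)) : Prop :=
  i ∈ tauSn x ∧ j ∉ tauSn x

open Classical in
/-- `f^{S_n}_{i,j}` : the unique one of `s_i x`, `s_j x` lying in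
`D^{S_n}_{j,i}` (junk outside the intended domain). -/
noncomputable def fSn {n : ℕ} (i j : ℕ) (x : Equiv.Perm (Fin n)) : Equiv.Perm (Fin n) :=
  if DSn j i (simpleMul i x) then simpleMul i x else simpleMul j x

/-- Generalized τ-equivalence to order `m` on permutations. -/
def approxSn {n : ℕ} : ℕ → Equiv.Perm (Fin n) → Equiv.Perm (Fin n) → Prop
  | 0, x, y => tauSn x = tauSn y
  | m + 1, x, y => approxSn m x y ∧
      ∀ i j, Adjacent i j → i + 1 < n → j + 1 < n →
        DSn i j x → DSn i j y → approxSn m (fSn i j x) (fSn i j y)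

/-- `v` lies strictly between `u` and `w`. -/
def Between {n : ℕ} (u v w : Fin n) : Prop :=
  (u < v ∧ v < w) ∨ (w < v ∧ v < u)

/-- `x` and `y` are related by a dual Knuth step of type `a + 2` (with our
0-indexed values, `a`, `a+1`, `a+2` play the roles of `i-1`, `i`, `i+1`):
their one-line notations differ either by transposing the values `a+1` and
`a+2` with the value `a` appearing between them, or by transposing the
values `a` and `a+1` with the value `a+2` appearing between them. -/
def DualKnuthStep {n : ℕ} (a : ℕ) (x y : Equiv.Perm (Fin n)) : Prop :=
  ∃ h : a + 2 < n,
    (y = simpleMul (a + 1) x ∧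
      Between (x⁻¹ ⟨a + 1, Nat.lt_of_succ_lt h⟩)
        (x⁻¹ ⟨a, Nat.lt_of_succ_lt (Nat.lt_of_succ_lt h)⟩)
        (x⁻¹ ⟨a + 2, h⟩)) ∨
    (y = simpleMul a x ∧
      Between (x⁻¹ ⟨a, Nat.lt_of_succ_lt (Nat.lt_of_succ_lt h)⟩)
        (x⁻¹ ⟨a + 2, h⟩)
        (x⁻¹ ⟨a + 1, Nat.lt_of_succ_lt h⟩))

/-! ## The Robinson–Schensted correspondence -/

/-- Schensted row-bumping: insert the value `v` into the given rows,
returning the new rows together with the index of the row where a new box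
was created. -/
def bump : List (List ℕ) → ℕ → List (List ℕ) × ℕ
  | [], v => ([[v]], 0)
  | r :: rs, v =>
    match r.findIdx? (fun a => decide (v < a)) with
    | none => ((r ++ [v]) :: rs, 0)
    | some c =>
      let out := bump rs (r.getD c 0)
      ((r.set c v) :: out.1, out.2 + 1)

/-- Append the value `k` at the end of row `r` (creating a new row at the
bottom if necessary). -/
def addAt (Q : List (List ℕ)) (r k : ℕ) : List (List ℕ) :=
  if r < Q.length then Q.set r ((Q.getD r []) ++ [k]) else Q ++ [[k]]

/-- Run the Robinson–Schensted algorithm on the one-line word of `x`,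
producing the insertion and recording tableaux as lists of rows (all values
0-indexed). -/
def RSrows {n : ℕ} (x : Equiv.Perm (Fin n)) : List (List ℕ) × List (List ℕ) :=
  (List.finRange n).foldl
    (fun PQ k =>
      let out := bump PQ.1 (x k : ℕ)
      (out.1, addAt PQ.2 out.2 (k : ℕ)))
    ([], [])

/-- The (row, column) position of the value `k` in a list of rows. -/
def posIn (rows : List (List ℕ)) (k : ℕ) : ℕ × ℕ :=
  (rows.findIdx (fun r => r.contains k),
   (rows.getD (rows.findIdx (fun r => r.contains k)) []).idxOf k)

/-- The insertion tableau `P(x)`, as a position function. -/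
def Ptab {n : ℕ} (x : Equiv.Perm (Fin n)) : ℕ → ℕ × ℕ :=
  fun k => posIn (RSrows x).1 k

/-- The recording tableau `Q(x)`, as a position function. -/
def Qtab {n : ℕ} (x : Equiv.Perm (Fin n)) : ℕ → ℕ × ℕ :=
  fun k => posIn (RSrows x).2 k

/-- Generalized τ-equivalence to order `m` between a permutation and a
filling. -/
def approxMixed {n : ℕ} : ℕ → Equiv.Perm (Fin n) → (ℕ → ℕ × ℕ) → Prop
  | 0, x, p => tauSn x = tauYT n p
  | m + 1, x, p => approxMixed m x p ∧
      ∀ i j, Adjacent i j → i + 1 < n → j + 1 < n →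
        DSn i j x → DYT n i j p →
        approxMixed m (fSn i j x) (fYT n i j p)

/-- Sequences of `f^YT`-moves: `ChainDefined n L p` says the sequence of
maps given by `L` is defined on `p`, i.e. each intermediate tableau lies in
the domain of the next map. -/
def ChainDefined (n : ℕ) : List (ℕ × ℕ) → (ℕ → ℕ × ℕ) → Prop
  | [], _ => True
  | ij :: L, p =>
      Adjacent ij.1 ij.2 ∧ ij.1 + 1 < n ∧ ij.2 + 1 < n ∧ DYT n ij.1 ij.2 p ∧
      ChainDefined n L (fYT n ij.1 ij.2 p)

/-- Apply a sequence of `f^YT`-moves. -/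
noncomputable def applySeq (n : ℕ) (L : List (ℕ × ℕ)) (p : ℕ → ℕ × ℕ) : ℕ → ℕ × ℕ :=
  L.foldl (fun q ij => fYT n ij.1 ij.2 q) p

/-! Suppose `p` and `p'` have the same generalized τ-invariant; we show by induction on `k` that
they agree on their first `k` entries, hence have the same shape. If they first differ at the
entry `k`, then `p k` and `p' k` are distinct addable boxes of the common shape `μ` of the first
`k` entries, so they lie in different rows, and the row just above the lower one ends in a
removable box `z` of `μ`. Any two standard tableaux of the same shape are connected by a chain of
moves `f^YT`; such a chain for the first `k` entries applies verbatim to both `p` and `p'` and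
brings the entry `k - 1` of both into `z`. Then `k - 1` lies in exactly one of the two
τ-invariants, which contradicts equivalence to the order given by the length of the chain. -/

open Set Function

section Shapes

variable {n k : ℕ} {p q : ℕ → ℕ × ℕ}

lemma mem_shapeYT {x : ℕ × ℕ} : x ∈ shapeYT n p ↔ ∃ j < n, p j = x := by
  simp [shapeYT]

lemma shapeYT_zero (p : ℕ → ℕ × ℕ) : shapeYT 0 p = ∅ := by
  simp [shapeYT]

lemma shapeYT_succ (n : ℕ) (p : ℕ → ℕ × ℕ) : shapeYT (n + 1) p = insert (p n) (shapeYT n p) := by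
  ext x
  simp only [mem_shapeYT, mem_insert_iff, Nat.lt_succ_iff_lt_or_eq]
  constructor
  · rintro ⟨j, hj | rfl, rfl⟩
    exacts [Or.inr ⟨j, hj, rfl⟩, Or.inl rfl]
  · rintro (rfl | ⟨j, hj, rfl⟩)
    exacts [⟨n, Or.inr rfl, rfl⟩, ⟨j, Or.inl hj, rfl⟩]

lemma shapeYT_congr (h : EqOn p q (Iio n)) (hk : k ≤ n) : shapeYT k p = shapeYT k q :=
  (h.mono (Iio_subset_Iio hk)).image_eq

lemma shapeYT_update_of_le (hk : n ≤ k) (z : ℕ × ℕ) : shapeYT n (update p k z) = shapeYT n p :=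
  shapeYT_congr (fun _ ht => update_of_ne (ne_of_lt (lt_of_lt_of_le ht hk)) _ _) le_rfl

lemma shapeYT_succ_update (k : ℕ) (z : ℕ × ℕ) :
    shapeYT (k + 1) (update p k z) = insert z (shapeYT k p) := by
  rw [shapeYT_succ, update_self, shapeYT_update_of_le le_rfl]

lemma shapeYT_finite (n : ℕ) (p : ℕ → ℕ × ℕ) : (shapeYT n p).Finite :=
  (finite_Iio n).image p

lemma shapeYT_swapEntries (hk : k + 1 < n) : shapeYT n (swapEntries k p) = shapeYT n p := by
  have hσ : ∀ t, Equiv.swap k (k + 1) t < n ↔ t < n := fun t => by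
    rw [Equiv.swap_apply_def]; split_ifs <;> omega
  ext x
  simp only [mem_shapeYT, swapEntries, comp_apply]
  constructor
  · rintro ⟨t, ht, rfl⟩
    exact ⟨_, (hσ t).2 ht, rfl⟩
  · rintro ⟨t, ht, rfl⟩
    exact ⟨Equiv.swap k (k + 1) t, (hσ _).2 ht, by simp⟩

end Shapes

section StandardTableaux

variable {n k : ℕ} {p q : ℕ → ℕ × ℕ}

lemma isSYT_iff : IsSYT n p ↔ InjOn p (Iio n) ∧ ∀ k < n, IsLowerSet (shapeYT (k + 1) p) := by
  have h : ∀ k, {x : ℕ × ℕ | ∃ j ≤ k, p j = x} = shapeYT (k + 1) p := fun k => by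
    ext x; simp [mem_shapeYT]
  simp only [IsSYT, h]

lemma IsSYT.congr (hp : IsSYT n p) (h : EqOn p q (Iio n)) : IsSYT n q := by
  rw [isSYT_iff] at hp ⊢
  exact ⟨hp.1.congr h, fun k hk => shapeYT_congr h hk ▸ hp.2 k hk⟩

lemma isSYT_congr (h : EqOn p q (Iio n)) : IsSYT n p ↔ IsSYT n q :=
  ⟨(·.congr h), (·.congr h.symm)⟩

lemma IsSYT.mono (hp : IsSYT n p) (hk : k ≤ n) : IsSYT k p :=
  ⟨hp.1.mono (Iio_subset_Iio hk), fun t ht => hp.2 t (lt_of_lt_of_le ht hk)⟩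

lemma IsSYT.isLowerSet_shapeYT (hp : IsSYT n p) : IsLowerSet (shapeYT n p) := by
  rcases n with _ | n
  · rw [shapeYT_zero]; exact isLowerSet_empty
  · exact (isSYT_iff.1 hp).2 n n.lt_succ_self

lemma IsSYT.ncard_shapeYT (hp : IsSYT n p) : (shapeYT n p).ncard = n := by
  rw [shapeYT, hp.1.ncard_image, ncard_Iio_nat]

lemma isSYT_succ_iff :
    IsSYT (n + 1) p ↔
      IsSYT n p ∧ p n ∉ shapeYT n p ∧ IsLowerSet (insert (p n) (shapeYT n p)) := by
  have hIio : Iio (n + 1) = insert n (Iio n) := by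
    ext t; simp
  rw [isSYT_iff, isSYT_iff, hIio, injOn_insert (by simp), Nat.forall_lt_succ_right,
    shapeYT_succ, shapeYT]
  tauto

lemma isSYT_update_iff {z : ℕ × ℕ} :
    IsSYT (k + 1) (update p k z) ↔
      IsSYT k p ∧ z ∉ shapeYT k p ∧ IsLowerSet (insert z (shapeYT k p)) := by
  rw [isSYT_succ_iff, update_self, shapeYT_update_of_le le_rfl,
    isSYT_congr fun t (ht : t < k) => update_of_ne (ne_of_lt ht) z p]

lemma IsSYT.update_of_mem {S : Set (ℕ × ℕ)} {z : ℕ × ℕ} (hp : IsSYT k p)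
    (hpS : shapeYT k p = S \ {z}) (hS : IsLowerSet S) (hz : z ∈ S) :
    IsSYT (k + 1) (update p k z) ∧ shapeYT (k + 1) (update p k z) = S := by
  have hins : insert z (S \ {z}) = S := by rw [insert_sdiff_singleton, insert_eq_of_mem hz]
  rw [isSYT_update_iff, shapeYT_succ_update, hpS, hins]
  exact ⟨⟨hp, fun h => h.2 rfl, hS⟩, rfl⟩

end StandardTableaux

section LowerSets

lemma IsLowerSet.sdiff_singleton_of_maximal {α : Type*} [PartialOrder α] {S : Set α}
    (hS : IsLowerSet S) {z : α}
    (hz : Maximal (· ∈ S) z) : IsLowerSet (S \ {z}) :=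
  hS.sdiff fun _ hb _ hc hcb => by
    rw [mem_singleton_iff] at hc ⊢; subst hc; exact hz.eq_of_ge hb hcb

variable {S : Set (ℕ × ℕ)}

theorem exists_isSYT (hfin : S.Finite) (hS : IsLowerSet S) :
    ∃ p, IsSYT S.ncard p ∧ shapeYT S.ncard p = S := by
  generalize hk : S.ncard = k
  induction k generalizing S with
  | zero =>
    refine ⟨fun _ => (0, 0), by simp [IsSYT], ?_⟩
    rw [shapeYT_zero, eq_comm, ← ncard_eq_zero hfin, hk]
  | succ k ih =>
    obtain ⟨z, hz⟩ := hfin.exists_maximal ((ncard_pos hfin).1 (by omega))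
    obtain ⟨p, hp, hpS⟩ := ih (hfin.subset sdiff_subset) (hS.sdiff_singleton_of_maximal hz)
      (by rw [ncard_sdiff_singleton_of_mem hz.1, hk]; rfl)
    exact ⟨_, hp.update_of_mem hpS hS hz.1⟩

theorem exists_isSYT_of_maximal (hfin : S.Finite) (hS : IsLowerSet S) {z : ℕ × ℕ}
    (hz : Maximal (· ∈ S) z) {k : ℕ} (hk : S.ncard = k + 1) :
    ∃ p, IsSYT (k + 1) p ∧ shapeYT (k + 1) p = S ∧ p k = z := by
  have hk' : (S \ {z}).ncard = k := by rw [ncard_sdiff_singleton_of_mem hz.1, hk]; rfl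
  obtain ⟨p, hp, hpS⟩ := exists_isSYT (hfin.subset sdiff_subset) (hS.sdiff_singleton_of_maximal hz)
  rw [hk'] at hp hpS
  obtain ⟨hpz, hpzS⟩ := hp.update_of_mem hpS hS hz.1
  exact ⟨update p k z, hpz, hpzS, update_self ..⟩

lemma exists_maximal_fst_add_one_eq (hfin : S.Finite) (hS : IsLowerSet S) {y : ℕ × ℕ}
    (hy : y ∉ S) (hyS : IsLowerSet (insert y S)) (hy0 : 0 < y.1) :
    ∃ z, Maximal (· ∈ S) z ∧ z.1 + 1 = y.1 := by
  have hu : (y.1 - 1, y.2) ∈ S := by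
    rcases hyS (show (y.1 - 1, y.2) ≤ y from ⟨Nat.sub_le _ _, le_rfl⟩) (mem_insert y S) with h | h
    · have : y.1 - 1 = y.1 := congrArg Prod.fst h
      omega
    · exact h
  obtain ⟨z, ⟨hzS, hyz, hzy⟩, hzmax⟩ :=
    (hfin.subset (sep_subset S fun w => (y.1 - 1, y.2) ≤ w ∧ w.1 < y.1)).exists_maximal
      ⟨_, hu, le_rfl, Nat.sub_lt hy0 one_pos⟩
  have hyz' : y.1 - 1 ≤ z.1 ∧ y.2 ≤ z.2 := hyz
  refine ⟨z, ⟨hzS, fun w hw hzw => ?_⟩, by omega⟩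
  by_cases hwy : w.1 < y.1
  · exact hzmax ⟨hw, hyz.trans hzw, hwy⟩ hzw
  · have hzw' : z.1 ≤ w.1 ∧ z.2 ≤ w.2 := hzw
    exact absurd (hS (show y ≤ w from ⟨by omega, by omega⟩) hw) hy

lemma exists_maximal_fst_between (hfin : S.Finite) (hS : IsLowerSet S) {x y : ℕ × ℕ}
    (hx : x ∉ S) (hxS : IsLowerSet (insert x S)) (hy : y ∉ S) (hyS : IsLowerSet (insert y S))
    (hxy : x ≠ y) :
    ∃ z, Maximal (· ∈ S) z ∧ (x.1 ≤ z.1 ∧ z.1 < y.1 ∨ y.1 ≤ z.1 ∧ z.1 < x.1) := by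
  rcases lt_trichotomy x.1 y.1 with h | h | h
  · obtain ⟨z, hz, hzy⟩ := exists_maximal_fst_add_one_eq hfin hS hy hyS (by omega)
    exact ⟨z, hz, Or.inl ⟨by omega, by omega⟩⟩
  · exfalso
    wlog hle : x.2 ≤ y.2 generalizing x y
    · exact this hy hyS hx hxS hxy.symm h.symm (by omega)
    rcases hyS (Prod.le_def.2 ⟨h.le, hle⟩) (mem_insert y S) with h' | h'
    exacts [hxy h', hx h']
  · obtain ⟨z, hz, hzx⟩ := exists_maximal_fst_add_one_eq hfin hS hx hxS (by omega)
    exact ⟨z, hz, Or.inr ⟨by omega, by omega⟩⟩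

lemma insert_inter_eq_of_insert_eq {α : Type*} {A A' : Set α} {c c' : α}
    (h : insert c A = insert c' A') (hne : c ≠ c') : insert c' (A ∩ A') = A := by
  have hc' : c' ∈ A := by
    have := h ▸ mem_insert c' A'
    exact this.resolve_left hne.symm
  refine subset_antisymm (insert_subset hc' inter_subset_left) fun a ha => ?_
  rcases (h ▸ mem_insert_of_mem c ha : a ∈ insert c' A') with rfl | ha'
  exacts [mem_insert _ _, mem_insert_of_mem _ ⟨ha, ha'⟩]

end LowerSets

section Moves

variable {n N i j k t : ℕ} {p q : ℕ → ℕ × ℕ}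

lemma swapEntries_apply_of_ne (h₁ : t ≠ k) (h₂ : t ≠ k + 1) : swapEntries k p t = p t := by
  simp [swapEntries, Equiv.swap_apply_of_ne_of_ne h₁ h₂]

lemma swapEntries_apply_left (k : ℕ) (p : ℕ → ℕ × ℕ) : swapEntries k p k = p (k + 1) := by
  simp [swapEntries]

lemma swapEntries_apply_right (k : ℕ) (p : ℕ → ℕ × ℕ) : swapEntries k p (k + 1) = p k := by
  simp [swapEntries]

lemma swapEntries_eqOn (hk : k + 1 < n) (h : EqOn p q (Iio n)) :
    EqOn (swapEntries k p) (swapEntries k q) (Iio n) := fun t (ht : t < n) =>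
  h (show Equiv.swap k (k + 1) t < n by rw [Equiv.swap_apply_def]; split_ifs <;> omega)

lemma swapEntries_update_update (p : ℕ → ℕ × ℕ) (a b : ℕ × ℕ) :
    swapEntries k (update (update p k a) (k + 1) b) = update (update p k b) (k + 1) a := by
  funext t
  simp only [swapEntries, comp_apply, Equiv.swap_apply_def, update_apply]
  split_ifs <;> first | rfl | omega

lemma mem_tauYT : i ∈ tauYT n p ↔ i + 1 < n ∧ (p i).1 < (p (i + 1)).1 := Iff.rfl

lemma tauYT_congr (h : EqOn p q (Iio n)) : tauYT n p = tauYT n q := by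
  ext i
  simp only [mem_tauYT]
  constructor <;> rintro ⟨hi, hlt⟩
  · exact ⟨hi, by rwa [← h (show i < n by omega), ← h (show i + 1 ∈ Iio n from hi)]⟩
  · exact ⟨hi, by rwa [h (show i < n by omega), h (show i + 1 ∈ Iio n from hi)]⟩

lemma dYT_congr (h : EqOn p q (Iio n)) : DYT n i j p ↔ DYT n i j q := by
  simp only [DYT, isSYT_congr h, tauYT_congr h]

lemma mem_tauYT_succ_iff (hi : i + 1 < N) : i ∈ tauYT (N + 1) p ↔ i ∈ tauYT N p := by
  simp only [mem_tauYT]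
  omega

lemma dYT_succ_iff (hx : p N ∉ shapeYT N p) (hlow : IsLowerSet (insert (p N) (shapeYT N p)))
    (hi : i + 1 < N) (hj : j + 1 < N) : DYT (N + 1) i j p ↔ DYT N i j p := by
  simp only [DYT, isSYT_succ_iff, hx, hlow, mem_tauYT_succ_iff hi, mem_tauYT_succ_iff hj,
    not_false_eq_true, and_true]

lemma fYT_eq_or (n i j : ℕ) (p : ℕ → ℕ × ℕ) :
    fYT n i j p = swapEntries i p ∨ fYT n i j p = swapEntries j p := by
  unfold fYT; split_ifs <;> simp

lemma fYT_eq_swapEntries (h : DYT n j i (swapEntries i p)) : fYT n i j p = swapEntries i p :=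
  if_pos h

/-- `s_i · Y` and `s_{i+1} · Y` cannot both lie in `D_{i+1,i}`: membership of the first says
that the entry `i+2` of `Y` lies in a lower row than the entry `i`, membership of the second that
it does not. -/
lemma fYT_eq_swapEntries_succ (h : DYT n (i + 1) i (swapEntries (i + 1) p)) :
    fYT n i (i + 1) p = swapEntries (i + 1) p := by
  refine if_neg fun h' => h.2.2 ⟨by have := h.2.1.1; omega, ?_⟩
  have := h'.2.1.2
  rw [swapEntries_apply_right, swapEntries_apply_of_ne (by omega) (by omega)] at this
  rwa [swapEntries_apply_left, swapEntries_apply_of_ne (by omega) (by omega)]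

lemma fYT_apply_of_le (hi : i + 1 < n) (hj : j + 1 < n) (ht : n ≤ t) : fYT n i j p t = p t := by
  rcases fYT_eq_or n i j p with h | h <;> rw [h] <;>
    exact swapEntries_apply_of_ne (by omega) (by omega)

lemma shapeYT_fYT (hi : i + 1 < n) (hj : j + 1 < n) : shapeYT n (fYT n i j p) = shapeYT n p := by
  rcases fYT_eq_or n i j p with h | h <;> rw [h]
  exacts [shapeYT_swapEntries hi, shapeYT_swapEntries hj]

lemma fYT_eqOn (hi : i + 1 < n) (hj : j + 1 < n) (h : EqOn p q (Iio n)) :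
    EqOn (fYT n i j p) (fYT n i j q) (Iio n) := by
  unfold fYT
  rw [dYT_congr (swapEntries_eqOn hi h)]
  split_ifs
  exacts [swapEntries_eqOn hi h, swapEntries_eqOn hj h]

lemma fYT_succ (hx : p N ∉ shapeYT N p) (hlow : IsLowerSet (insert (p N) (shapeYT N p)))
    (hi : i + 1 < N) (hj : j + 1 < N) : fYT (N + 1) i j p = fYT N i j p := by
  have hN : swapEntries i p N = p N := swapEntries_apply_of_ne (by omega) (by omega)
  unfold fYT
  rw [dYT_succ_iff (by rwa [hN, shapeYT_swapEntries hi]) (by rwa [hN, shapeYT_swapEntries hi])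
    hj hi]

end Moves

section Chains

variable {n N k t : ℕ} {L : List (ℕ × ℕ)} {p q : ℕ → ℕ × ℕ}

lemma applySeq_cons (n : ℕ) (ij : ℕ × ℕ) (L : List (ℕ × ℕ)) (p : ℕ → ℕ × ℕ) :
    applySeq n (ij :: L) p = applySeq n L (fYT n ij.1 ij.2 p) := rfl

lemma applySeq_append (n : ℕ) (L₁ L₂ : List (ℕ × ℕ)) (p : ℕ → ℕ × ℕ) :
    applySeq n (L₁ ++ L₂) p = applySeq n L₂ (applySeq n L₁ p) :=
  List.foldl_append ..

lemma ChainDefined.append {L₂ : List (ℕ × ℕ)} (h₁ : ChainDefined n L p)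
    (h₂ : ChainDefined n L₂ (applySeq n L p)) : ChainDefined n (L ++ L₂) p := by
  induction L generalizing p with
  | nil => exact h₂
  | cons ij L ih =>
    obtain ⟨hadj, hi, hj, hD, hL⟩ := h₁
    exact ⟨hadj, hi, hj, hD, ih hL h₂⟩

lemma ChainDefined.applySeq_apply_of_le (h : ChainDefined n L p) (ht : n ≤ t) :
    applySeq n L p t = p t := by
  induction L generalizing p with
  | nil => rfl
  | cons ij L ih =>
    rw [applySeq_cons, ih h.2.2.2.2, fYT_apply_of_le h.2.1 h.2.2.1 ht]

lemma ChainDefined.congr (h : ChainDefined n L p) (hpq : EqOn p q (Iio n)) :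
    ChainDefined n L q ∧ EqOn (applySeq n L p) (applySeq n L q) (Iio n) := by
  induction L generalizing p q with
  | nil => exact ⟨trivial, hpq⟩
  | cons ij L ih =>
    obtain ⟨hadj, hi, hj, hD, hL⟩ := h
    obtain ⟨hLq, heq⟩ := ih hL (fYT_eqOn hi hj hpq)
    exact ⟨⟨hadj, hi, hj, (dYT_congr hpq).1 hD, hLq⟩, heq⟩

lemma ChainDefined.lift_succ (hx : p N ∉ shapeYT N p)
    (hlow : IsLowerSet (insert (p N) (shapeYT N p))) (h : ChainDefined N L p) :
    ChainDefined (N + 1) L p ∧ applySeq (N + 1) L p = applySeq N L p := by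
  induction L generalizing p with
  | nil => exact ⟨trivial, rfl⟩
  | cons ij L ih =>
    obtain ⟨hadj, hi, hj, hD, hL⟩ := h
    have hf := fYT_succ hx hlow hi hj
    have hfN : fYT N ij.1 ij.2 p N = p N := fYT_apply_of_le hi hj le_rfl
    obtain ⟨hL', heq⟩ := ih (by rwa [hfN, shapeYT_fYT hi hj]) (by rwa [hfN, shapeYT_fYT hi hj]) hL
    refine ⟨⟨hadj, by omega, by omega, (dYT_succ_iff hx hlow hi hj).2 hD, hf ▸ hL'⟩, ?_⟩
    rw [applySeq_cons, applySeq_cons, hf, heq]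

lemma ChainDefined.lift (hp : IsSYT n p) (hk : k ≤ n) (h : ChainDefined k L p) :
    ChainDefined n L p ∧ applySeq n L p = applySeq k L p := by
  induction n, hk using Nat.le_induction with
  | base => exact ⟨h, rfl⟩
  | succ m hkm ih =>
    obtain ⟨-, hx, hlow⟩ := isSYT_succ_iff.1 hp
    obtain ⟨hm, heq⟩ := ih (hp.mono m.le_succ)
    obtain ⟨hm', heq'⟩ := hm.lift_succ hx hlow
    exact ⟨hm', heq'.trans heq⟩

lemma approxYT_applySeq {p' : ℕ → ℕ × ℕ} (h : ChainDefined n L p) (h' : ChainDefined n L p')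
    {m : ℕ} (happrox : approxYT n (L.length + m) p p') :
    approxYT n m (applySeq n L p) (applySeq n L p') := by
  induction L generalizing p p' with
  | nil => simpa [applySeq] using happrox
  | cons ij L ih =>
    obtain ⟨hadj, hi, hj, hD, hL⟩ := h
    obtain ⟨-, -, -, hD', hL'⟩ := h'
    rw [List.length_cons, Nat.add_right_comm] at happrox
    exact ih hL hL' (happrox.2 _ _ hadj hi hj hD hD')

end Chains

def ReachableYT (n : ℕ) (p q : ℕ → ℕ × ℕ) : Prop :=
  ∃ L, ChainDefined n L p ∧ EqOn (applySeq n L p) q (Iio n)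

section Reachable

variable {n N k : ℕ} {p q r : ℕ → ℕ × ℕ}

lemma ReachableYT.trans (hpq : ReachableYT n p q) (hqr : ReachableYT n q r) :
    ReachableYT n p r := by
  obtain ⟨L₁, hL₁, heq₁⟩ := hpq
  obtain ⟨L₂, hL₂, heq₂⟩ := hqr
  obtain ⟨hL₂', heq⟩ := hL₂.congr heq₁.symm
  exact ⟨L₁ ++ L₂, hL₁.append hL₂', by rw [applySeq_append]; exact heq.symm.trans heq₂⟩

lemma ReachableYT.lift_succ (h : ReachableYT N p q) (hp : IsSYT (N + 1) p) (hpq : p N = q N) :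
    ReachableYT (N + 1) p q := by
  obtain ⟨L, hL, heq⟩ := h
  obtain ⟨-, hx, hlow⟩ := isSYT_succ_iff.1 hp
  obtain ⟨hL', happ⟩ := hL.lift_succ hx hlow
  refine ⟨L, hL', fun t (ht : t < N + 1) => ?_⟩
  rw [happ]
  rcases Nat.lt_succ_iff_lt_or_eq.1 ht with ht | rfl
  exacts [heq ht, (hL.applySeq_apply_of_le le_rfl).trans hpq]

lemma reachableYT_swapEntries (hk : k + 2 < n) (hp : IsSYT n p)
    (hp' : IsSYT n (swapEntries (k + 1) p))
    (hrow : (p (k + 2)).1 ≤ (p k).1 ∧ (p k).1 < (p (k + 1)).1 ∨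
      (p (k + 1)).1 ≤ (p k).1 ∧ (p k).1 < (p (k + 2)).1) :
    ReachableYT n p (swapEntries (k + 1) p) := by
  have hs : swapEntries (k + 1) p k = p k := swapEntries_apply_of_ne (by omega) (by omega)
  have hs₁ : swapEntries (k + 1) p (k + 1) = p (k + 2) := swapEntries_apply_left (k + 1) p
  have hs₂ : swapEntries (k + 1) p (k + 2) = p (k + 1) := swapEntries_apply_right (k + 1) p
  rcases hrow with ⟨h₁, h₂⟩ | ⟨h₁, h₂⟩
  · have hD : DYT n (k + 1) k (swapEntries (k + 1) p) := by
      simp only [DYT, mem_tauYT, add_assoc, Nat.reduceAdd, hs, hs₁, hs₂]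
      exact ⟨hp', ⟨by omega, by omega⟩, by omega⟩
    refine ⟨[(k, k + 1)], ⟨Or.inr rfl, by omega, by omega, ?_, trivial⟩, ?_⟩
    · simp only [DYT, mem_tauYT, add_assoc, Nat.reduceAdd]
      exact ⟨hp, ⟨by omega, by omega⟩, by omega⟩
    · rw [applySeq_cons, fYT_eq_swapEntries_succ hD]
      exact eqOn_refl _ _
  · have hD : DYT n k (k + 1) (swapEntries (k + 1) p) := by
      simp only [DYT, mem_tauYT, add_assoc, Nat.reduceAdd, hs, hs₁, hs₂]
      exact ⟨hp', ⟨by omega, by omega⟩, by omega⟩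
    refine ⟨[(k + 1, k)], ⟨Or.inl rfl, by omega, by omega, ?_, trivial⟩, ?_⟩
    · simp only [DYT, mem_tauYT, add_assoc, Nat.reduceAdd]
      exact ⟨hp, ⟨by omega, by omega⟩, by omega⟩
    · rw [applySeq_cons, fYT_eq_swapEntries hD]
      exact eqOn_refl _ _

end Reachable

section Connectivity

variable {N : ℕ} {T T' : ℕ → ℕ × ℕ}

lemma exists_isSYT_pivot (hT : IsSYT (N + 1) T) (hT' : IsSYT (N + 1) T')
    (hsh : insert (T N) (shapeYT N T) = insert (T' N) (shapeYT N T')) (hne : T N ≠ T' N) :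
    ∃ K U, N = K + 2 ∧ IsSYT (K + 1) U ∧ insert (T' N) (shapeYT (K + 1) U) = shapeYT N T ∧
      insert (T N) (shapeYT (K + 1) U) = shapeYT N T' ∧
      ((T N).1 ≤ (U K).1 ∧ (U K).1 < (T' N).1 ∨ (T' N).1 ≤ (U K).1 ∧ (U K).1 < (T N).1) := by
  obtain ⟨hTN, hc, -⟩ := isSYT_succ_iff.1 hT
  obtain ⟨hT'N, hc', -⟩ := isSYT_succ_iff.1 hT'
  set μ := shapeYT N T ∩ shapeYT N T'
  have hμA : insert (T' N) μ = shapeYT N T := insert_inter_eq_of_insert_eq hsh hne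
  have hμA' : insert (T N) μ = shapeYT N T' := by
    simpa only [μ, inter_comm] using insert_inter_eq_of_insert_eq hsh.symm hne.symm
  have hfin : μ.Finite := (shapeYT_finite N T).subset inter_subset_left
  have hμ : IsLowerSet μ := hTN.isLowerSet_shapeYT.inter hT'N.isLowerSet_shapeYT
  have hc'μ : T' N ∉ μ := fun h => hc' h.2
  obtain ⟨e, he, hrow⟩ := exists_maximal_fst_between hfin hμ (fun h => hc h.1)
    (hμA' ▸ hT'N.isLowerSet_shapeYT) hc'μ (hμA ▸ hTN.isLowerSet_shapeYT) hne
  have hcard : μ.ncard + 1 = N := by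
    rw [← ncard_insert_of_notMem hc'μ hfin, hμA, hTN.ncard_shapeYT]
  obtain ⟨K, hK⟩ : ∃ K, μ.ncard = K + 1 := Nat.exists_eq_add_one.2 ((ncard_pos hfin).2 ⟨e, he.1⟩)
  obtain ⟨U, hU, hUμ, rfl⟩ := exists_isSYT_of_maximal hfin hμ he hK
  exact ⟨K, U, by omega, hU, hUμ ▸ hμA, hUμ ▸ hμA', hrow⟩

/-- When the last entries of `T` and `T'` differ, route through a tableau `V` ending in
`…, e, T' N, T N` and its image `V'` ending in `…, e, T N, T' N`, where `e` is a removable box of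
the common part of both shapes lying in a row between those of `T N` and `T' N`. -/
lemma reachableYT_of_apply_ne
    (IH : ∀ {T T'}, IsSYT N T → IsSYT N T' → shapeYT N T = shapeYT N T' → ReachableYT N T T')
    (hT : IsSYT (N + 1) T) (hT' : IsSYT (N + 1) T')
    (hsh : insert (T N) (shapeYT N T) = insert (T' N) (shapeYT N T')) (hne : T N ≠ T' N) :
    ReachableYT (N + 1) T T' := by
  obtain ⟨hTN, hc, hcA⟩ := isSYT_succ_iff.1 hT
  obtain ⟨hT'N, hc', hcA'⟩ := isSYT_succ_iff.1 hT'
  obtain ⟨K, U, rfl, hU, hUT, hUT', hrow⟩ := exists_isSYT_pivot hT hT' hsh hne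
  set V := update (update U (K + 1) (T' (K + 2))) (K + 2) (T (K + 2))
  set V' := update (update U (K + 1) (T (K + 2))) (K + 2) (T' (K + 2))
  have hV : IsSYT (K + 2 + 1) V := by
    rw [isSYT_update_iff, isSYT_update_iff, shapeYT_succ_update, hUT]
    exact ⟨⟨hU, fun h => hc' (hUT' ▸ mem_insert_of_mem _ h), hTN.isLowerSet_shapeYT⟩, hc, hcA⟩
  have hV' : IsSYT (K + 2 + 1) V' := by
    rw [isSYT_update_iff, isSYT_update_iff, shapeYT_succ_update, hUT']
    exact ⟨⟨hU, fun h => hc (hUT ▸ mem_insert_of_mem _ h), hT'N.isLowerSet_shapeYT⟩, hc', hcA'⟩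
  have hTV : ReachableYT (K + 2 + 1) T V := by
    refine (IH hTN (hV.mono (K + 2).le_succ) ?_).lift_succ hT (by simp [V])
    rw [shapeYT_update_of_le le_rfl, shapeYT_succ_update, hUT]
  have hV'T' : ReachableYT (K + 2 + 1) V' T' := by
    refine (IH (hV'.mono (K + 2).le_succ) hT'N ?_).lift_succ hV' (by simp [V'])
    rw [shapeYT_update_of_le le_rfl, shapeYT_succ_update, hUT']
  have hVV' : swapEntries (K + 1) V = V' := swapEntries_update_update U _ _
  refine (hTV.trans ?_).trans hV'T'
  rw [← hVV']
  exact reachableYT_swapEntries (by omega) hV (hVV' ▸ hV') (by simpa [V] using hrow)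

theorem reachableYT_of_shapeYT_eq (n : ℕ) {T T' : ℕ → ℕ × ℕ} (hT : IsSYT n T) (hT' : IsSYT n T')
    (hsh : shapeYT n T = shapeYT n T') : ReachableYT n T T' := by
  induction n using Nat.strong_induction_on generalizing T T' with
  | _ n IH =>
  rcases n with _ | N
  · exact ⟨[], trivial, fun t ht => absurd ht (Nat.not_lt_zero t)⟩
  obtain ⟨hTN, hc, -⟩ := isSYT_succ_iff.1 hT
  obtain ⟨hT'N, hc', -⟩ := isSYT_succ_iff.1 hT'
  rw [shapeYT_succ, shapeYT_succ] at hsh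
  by_cases hne : T N = T' N
  · have hA : shapeYT N T = shapeYT N T' := by
      rw [← insert_sdiff_self_of_notMem hc, hsh, hne, insert_sdiff_self_of_notMem hc']
    exact (IH N N.lt_succ_self hTN hT'N hA).lift_succ hT hne
  · exact reachableYT_of_apply_ne (IH N N.lt_succ_self) hT hT' hsh hne

end Connectivity

section Separation

variable {n k : ℕ} {p p' : ℕ → ℕ × ℕ}

lemma exists_chainDefined_tauYT_ne (hp : IsSYT n p) (hp' : IsSYT n p') (hk : k < n)
    (hpp' : EqOn p p' (Iio k)) (hne : p k ≠ p' k) :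
    ∃ L, ChainDefined n L p ∧ ChainDefined n L p' ∧
      tauYT n (applySeq n L p) ≠ tauYT n (applySeq n L p') := by
  obtain ⟨hpk, hx, hxA⟩ := isSYT_succ_iff.1 (hp.mono hk)
  obtain ⟨-, hy, hyA⟩ := isSYT_succ_iff.1 (hp'.mono hk)
  rw [← shapeYT_congr hpp' le_rfl] at hy hyA
  obtain ⟨z, hz, hrow⟩ :=
    exists_maximal_fst_between (shapeYT_finite k p) hpk.isLowerSet_shapeYT hx hxA hy hyA hne
  obtain ⟨M, rfl⟩ : ∃ M, k = M + 1 := by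
    obtain ⟨j, hj, -⟩ := mem_shapeYT.1 hz.1
    exact Nat.exists_eq_add_one.2 (by omega)
  obtain ⟨V, hV, hVA, hVM⟩ :=
    exists_isSYT_of_maximal (shapeYT_finite _ p) hpk.isLowerSet_shapeYT hz hpk.ncard_shapeYT
  obtain ⟨L, hL, hLV⟩ := reachableYT_of_shapeYT_eq (M + 1) hpk hV hVA.symm
  obtain ⟨hL', hLL'⟩ := hL.congr hpp'
  obtain ⟨hLn, happ⟩ := hL.lift hp hk.le
  obtain ⟨hLn', happ'⟩ := hL'.lift hp' hk.le
  refine ⟨L, hLn, hLn', fun htau => ?_⟩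
  have hM : ∀ q : ℕ → ℕ × ℕ, q M = z → (M ∈ tauYT n q ↔ z.1 < (q (M + 1)).1) :=
    fun q hq => by rw [mem_tauYT, hq]; omega
  have hLM : applySeq (M + 1) L p M = z := (hLV M.lt_succ_self).trans hVM
  have h := hM (applySeq n L p) (by rw [happ]; exact hLM)
  have h' := hM (applySeq n L p') (by rw [happ', ← hLL' M.lt_succ_self]; exact hLM)
  rw [htau, h', happ', hL'.applySeq_apply_of_le le_rfl, happ, hL.applySeq_apply_of_le le_rfl] at h
  omega

lemma eqOn_of_forall_approxYT (hp : IsSYT n p) (hp' : IsSYT n p')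
    (h : ∀ m, approxYT n m p p') : EqOn p p' (Iio n) := by
  suffices ∀ k ≤ n, EqOn p p' (Iio k) from this n le_rfl
  intro k hk
  induction k with
  | zero => simp
  | succ k ih =>
    have hpp' := ih (by omega)
    have hpk : p k = p' k := by
      by_contra hne
      obtain ⟨L, hL, hL', htau⟩ := exists_chainDefined_tauYT_ne hp hp' hk hpp' hne
      exact htau (approxYT_applySeq hL hL' (h (L.length + 0)))
    intro t (ht : t < k + 1)
    rcases Nat.lt_succ_iff_lt_or_eq.1 ht with ht | rfl
    exacts [hpp' ht, hpk]

end Separation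

/-- Standard Young tableaux with `n` boxes of different shapes
have different generalized τ-invariants. -/
theorem stmt6 (n : ℕ) (p p' : ℕ → ℕ × ℕ) (hp : IsSYT n p) (hp' : IsSYT n p')
    (hne : shapeYT n p ≠ shapeYT n p') :
    ∃ m : ℕ, ¬ approxYT n m p p' := by
  by_contra! h
  exact hne (eqOn_of_forall_approxYT hp hp' h).image_eq
end

section
/- Let s_i and s_j be adjacent simple transpositions in S_n and let x ∈ D^{S_n}_{i,j}. Then x and f^{S_n}_{i,j}(x) are related by a dual Knuth step of type k, where k is the larger of i and j. -/
/-! Write `A`, `B`, `C` for the positions in `x` of the values `a`, `a + 1`, `a + 2`, where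
`a = min i j` (paper type `max i j` after the shift of indices). The hypothesis `x ∈ D_{i,j}`
places `B` relative to `A` and `C`; the order of `A` and `C` then decides which of `s_i x`,
`s_j x` lies in `D_{j,i}`, and in either case the value left in place sits between the two
values that are exchanged. -/

section SimpleMul

variable {n : ℕ} {x : Equiv.Perm (Fin n)}

lemma mem_tauSn_iff {i : ℕ} (h : i + 1 < n) :
    i ∈ tauSn x ↔ x⁻¹ ⟨i + 1, h⟩ < x⁻¹ ⟨i, by omega⟩ :=
  ⟨fun ⟨_, hlt⟩ => hlt, fun hlt => ⟨h, hlt⟩⟩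

lemma inv_apply_ne {k l : ℕ} (hk : k < n) (hl : l < n) (hkl : k ≠ l) :
    x⁻¹ ⟨k, hk⟩ ≠ x⁻¹ ⟨l, hl⟩ :=
  x⁻¹.injective.ne (Fin.ne_of_val_ne hkl)

lemma inv_apply_lt_of_notMem_tauSn {k : ℕ} (hk : k + 1 < n) (hx : k ∉ tauSn x) :
    x⁻¹ ⟨k, by omega⟩ < x⁻¹ ⟨k + 1, hk⟩ := by
  rw [mem_tauSn_iff hk, not_lt] at hx
  exact hx.lt_of_ne (inv_apply_ne _ _ (by omega))

lemma simpleMul_inv_apply {k : ℕ} (hk : k + 1 < n) (v : Fin n) :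
    (simpleMul k x)⁻¹ v = x⁻¹ (Equiv.swap ⟨k, by omega⟩ ⟨k + 1, hk⟩ v) := by
  rw [simpleMul, dif_pos hk, mul_inv_rev, Equiv.swap_inv, Equiv.Perm.mul_apply]

lemma simpleMul_inv_apply_left {k : ℕ} (hk : k + 1 < n) :
    (simpleMul k x)⁻¹ ⟨k, by omega⟩ = x⁻¹ ⟨k + 1, hk⟩ := by
  rw [simpleMul_inv_apply hk, Equiv.swap_apply_left]

lemma simpleMul_inv_apply_right {k : ℕ} (hk : k + 1 < n) :
    (simpleMul k x)⁻¹ ⟨k + 1, hk⟩ = x⁻¹ ⟨k, by omega⟩ := by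
  rw [simpleMul_inv_apply hk, Equiv.swap_apply_right]

lemma simpleMul_inv_apply_of_ne {k v : ℕ} (hk : k + 1 < n) (hv : v < n) (hvk : v ≠ k)
    (hvk' : v ≠ k + 1) : (simpleMul k x)⁻¹ ⟨v, hv⟩ = x⁻¹ ⟨v, hv⟩ := by
  rw [simpleMul_inv_apply hk, Equiv.swap_apply_of_ne_of_ne (Fin.ne_of_val_ne hvk)
    (Fin.ne_of_val_ne hvk')]

lemma notMem_tauSn_simpleMul_self {k : ℕ} (hx : k ∈ tauSn x) : k ∉ tauSn (simpleMul k x) := by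
  obtain ⟨hk, hlt⟩ := hx
  rw [mem_tauSn_iff hk, simpleMul_inv_apply_left hk, simpleMul_inv_apply_right hk]
  exact hlt.asymm

lemma succ_mem_tauSn_simpleMul_iff {k : ℕ} (hk : k + 2 < n) :
    k + 1 ∈ tauSn (simpleMul k x) ↔ x⁻¹ ⟨k + 2, hk⟩ < x⁻¹ ⟨k, by omega⟩ := by
  rw [mem_tauSn_iff hk, simpleMul_inv_apply_right (by omega),
    simpleMul_inv_apply_of_ne (by omega) hk (by omega) (by omega)]

lemma mem_tauSn_simpleMul_succ_iff {k : ℕ} (hk : k + 2 < n) :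
    k ∈ tauSn (simpleMul (k + 1) x) ↔ x⁻¹ ⟨k + 2, hk⟩ < x⁻¹ ⟨k, by omega⟩ := by
  rw [mem_tauSn_iff (by omega), simpleMul_inv_apply_left hk,
    simpleMul_inv_apply_of_ne hk (by omega) (by omega) (by omega)]

end SimpleMul

section DualKnuth

variable {n a : ℕ} {x : Equiv.Perm (Fin n)}

lemma fSn_succ_self_eq (h : a + 2 < n) (hx : a + 1 ∈ tauSn x) :
    fSn (a + 1) a x =
      if x⁻¹ ⟨a + 2, h⟩ < x⁻¹ ⟨a, by omega⟩ then simpleMul (a + 1) x else simpleMul a x := by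
  simp only [fSn, DSn, notMem_tauSn_simpleMul_self hx, not_false_eq_true, and_true,
    mem_tauSn_simpleMul_succ_iff h]

lemma fSn_self_succ_eq (h : a + 2 < n) (hx : a ∈ tauSn x) :
    fSn a (a + 1) x =
      if x⁻¹ ⟨a + 2, h⟩ < x⁻¹ ⟨a, by omega⟩ then simpleMul a x else simpleMul (a + 1) x := by
  simp only [fSn, DSn, notMem_tauSn_simpleMul_self hx, not_false_eq_true, and_true,
    succ_mem_tauSn_simpleMul_iff h]

lemma dualKnuthStep_fSn_succ_self (h : a + 2 < n) (hx : DSn (a + 1) a x) :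
    DualKnuthStep a x (fSn (a + 1) a x) := by
  obtain ⟨hCB, hAB⟩ := hx
  rw [fSn_succ_self_eq h hCB]
  rw [mem_tauSn_iff h] at hCB
  replace hAB := inv_apply_lt_of_notMem_tauSn (by omega) hAB
  refine ⟨h, ?_⟩
  rcases (inv_apply_ne (x := x) (by omega) h (by omega : a ≠ a + 2)).lt_or_gt with hAC | hCA
  · rw [if_neg hAC.asymm]
    exact Or.inr ⟨rfl, Or.inl ⟨hAC, hCB⟩⟩
  · rw [if_pos hCA]
    exact Or.inl ⟨rfl, Or.inr ⟨hCA, hAB⟩⟩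

lemma dualKnuthStep_fSn_self_succ (h : a + 2 < n) (hx : DSn a (a + 1) x) :
    DualKnuthStep a x (fSn a (a + 1) x) := by
  obtain ⟨hBA, hBC⟩ := hx
  rw [fSn_self_succ_eq h hBA]
  rw [mem_tauSn_iff (by omega)] at hBA
  replace hBC := inv_apply_lt_of_notMem_tauSn h hBC
  refine ⟨h, ?_⟩
  rcases (inv_apply_ne (x := x) (by omega) h (by omega : a ≠ a + 2)).lt_or_gt with hAC | hCA
  · rw [if_neg hAC.asymm]
    exact Or.inl ⟨rfl, Or.inl ⟨hBA, hAC⟩⟩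
  · rw [if_pos hCA]
    exact Or.inr ⟨rfl, Or.inr ⟨hBC, hCA⟩⟩

end DualKnuth

/-- For adjacent simple transpositions `s_i`, `s_j` and
`x ∈ D^{S_n}_{i,j}`, the permutations `x` and `f^{S_n}_{i,j}(x)` are related
by a dual Knuth step of type `k = max i j` (paper indexing); in our 0-shifted
conventions this is `DualKnuthStep (min i j)`. -/
theorem stmt11 {n : ℕ} (i j : ℕ) (hadj : Adjacent i j) (hi : i + 1 < n)
    (hj : j + 1 < n) (x : Equiv.Perm (Fin n)) (hx : DSn i j x) :
    DualKnuthStep (min i j) x (fSn i j x) := by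
  rcases hadj with rfl | rfl
  · rw [min_eq_right (Nat.le_succ j)]
    exact dualKnuthStep_fSn_succ_self hi hx
  · rw [min_eq_left (Nat.le_succ i)]
    exact dualKnuthStep_fSn_self_succ hj hx
end
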